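/- Under the nested-models setup, the conditional risk of the GLS model averaging estimator satisfies R*(w) = Σ_{m=1}^{M} Σ_{l=1}^{M} w_m w_l [ μ' Σ^{-1/2} (I − P_{max{m,l}}) Σ^{-1/2} μ + min{k_m, k_l} ] for every weight vector w with nonnegative entries summing to 1. -/

import Mathlib

/-!
Whitening by the symmetric square root `S` of `Σ` turns the GLS fit of model `m` into the
orthogonal projection `H m` onto the columns of `S⁻¹ X m`, and `P*(w) = S (∑ w m • H m) S⁻¹`.
Nested column spaces give `H m * H l = H (min m l)`, hence
`(H m - 1) * (H l - 1) = 1 - H (max m l)`. The loss is a quadratic form in `e`, whose mean is the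
bias `μ'S⁻¹(∑ w H - 1)²S⁻¹μ` plus the variance `tr((∑ w H)²)`; expanding both squares in the
weights and using `tr (H m) = k m` gives the formula.
-/

open Matrix MeasureTheory

noncomputable def hatMatrix {R m k : Type*} [CommRing R] [Fintype m] [Fintype k] [DecidableEq k]
    (Z : Matrix m k R) : Matrix m m R :=
  Z * (Zᵀ * Z)⁻¹ * Zᵀ

section HatMatrix

variable {R m k l : Type*} [CommRing R] [Fintype m] [Fintype k] [DecidableEq k]
  [Fintype l] [DecidableEq l]

theorem transpose_hatMatrix (Z : Matrix m k R) : (hatMatrix Z)ᵀ = hatMatrix Z := by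
  simp only [hatMatrix, transpose_mul, transpose_transpose, transpose_nonsing_inv,
    Matrix.mul_assoc]

theorem hatMatrix_mul_self {Z : Matrix m k R} (hZ : IsUnit (Zᵀ * Z).det) :
    hatMatrix Z * Z = Z := by
  rw [hatMatrix, Matrix.mul_assoc, Matrix.mul_assoc, nonsing_inv_mul _ hZ, Matrix.mul_one]

theorem hatMatrix_mul_hatMatrix_mul {Z : Matrix m k R} (hZ : IsUnit (Zᵀ * Z).det)
    (E : Matrix k l R) : hatMatrix Z * hatMatrix (Z * E) = hatMatrix (Z * E) := by
  rw [hatMatrix.eq_1 (Z * E)]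
  simp only [← Matrix.mul_assoc, hatMatrix_mul_self hZ]

theorem hatMatrix_mul_mul_hatMatrix {Z : Matrix m k R} (hZ : IsUnit (Zᵀ * Z).det)
    (E : Matrix k l R) : hatMatrix (Z * E) * hatMatrix Z = hatMatrix (Z * E) := by
  simpa only [transpose_mul, transpose_hatMatrix] using
    congrArg transpose (hatMatrix_mul_hatMatrix_mul hZ E)

theorem trace_hatMatrix {Z : Matrix m k R} (hZ : IsUnit (Zᵀ * Z).det) :
    trace (hatMatrix Z) = Fintype.card k := by
  rw [hatMatrix, trace_mul_comm, ← Matrix.mul_assoc, mul_nonsing_inv _ hZ, trace_one]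

theorem isUnit_det_transpose_mul_self {Z : Matrix m k ℝ} (hZ : LinearIndependent ℝ Z.col) :
    IsUnit (Zᵀ * Z).det :=
  (isUnit_iff_isUnit_det _).mp
    (PosDef.conjTranspose_mul_self Z (mulVec_injective_iff.mpr hZ)).isUnit

end HatMatrix

theorem linearIndependent_col_mul {K m k : Type*} [Field K] [Fintype m] [DecidableEq m]
    [Fintype k] {A : Matrix m m K} (hA : IsUnit A) {B : Matrix m k K}
    (hB : LinearIndependent K B.col) : LinearIndependent K (A * B).col := by
  rw [← mulVec_injective_iff] at hB ⊢
  rw [show (A * B).mulVec = A.mulVec ∘ B.mulVec from funext fun v => (mulVec_mulVec v _ _).symm]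
  exact (mulVec_injective_of_isUnit hA).comp hB

theorem eq_mul_submatrix_one_of_apply_eq {R m n o : Type*} [Semiring R] [Fintype n]
    [DecidableEq n] {A : Matrix m o R} {B : Matrix m n R} (f : o → n)
    (h : ∀ i j, A i j = B i (f j)) : A = B * (1 : Matrix n n R).submatrix id f := by
  ext i j
  simp [mul_apply, one_apply, h]

section Whitening

variable {R m k : Type*} [CommRing R] [Fintype m] [DecidableEq m] [Fintype k] [DecidableEq k]
  {S : Matrix m m R}

theorem hatMatrix_inv_mul (hS : Sᵀ = S) (X : Matrix m k R) :
    hatMatrix (S⁻¹ * X) = S⁻¹ * X * (Xᵀ * (S * S)⁻¹ * X)⁻¹ * Xᵀ * S⁻¹ := by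
  simp only [hatMatrix, transpose_mul, transpose_nonsing_inv, hS, Matrix.mul_inv_rev,
    Matrix.mul_assoc]

theorem mul_hatMatrix_inv_mul_mul_inv (hS : Sᵀ = S) (hSdet : IsUnit S.det) (X : Matrix m k R) :
    S * hatMatrix (S⁻¹ * X) * S⁻¹ = X * (Xᵀ * (S * S)⁻¹ * X)⁻¹ * Xᵀ * (S * S)⁻¹ := by
  simp only [hatMatrix_inv_mul hS, Matrix.mul_inv_rev, ← Matrix.mul_assoc, mul_nonsing_inv _ hSdet,
    Matrix.one_mul]

theorem transpose_conj_mul_inv_mul_conj (hS : Sᵀ = S) (hSdet : IsUnit S.det)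
    (A B : Matrix m m R) :
    (S * A * S⁻¹)ᵀ * (S * S)⁻¹ * (S * B * S⁻¹) = S⁻¹ * (Aᵀ * B) * S⁻¹ := by
  simp only [transpose_mul, transpose_nonsing_inv, hS, Matrix.mul_inv_rev, Matrix.mul_assoc]
  rw [mul_nonsing_inv_cancel_left _ _ hSdet, nonsing_inv_mul_cancel_left _ _ hSdet]

end Whitening

section NestedFamily

variable {R A ι : Type*} [CommRing R] [Ring A] [Algebra R A] [LinearOrder ι] {H : ι → A}

theorem sub_one_mul_sub_one_of_mul_eq_min (hH : ∀ i j, H i * H j = H (min i j)) (i j : ι) :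
    (H i - 1) * (H j - 1) = 1 - H (max i j) := by
  have hHH := hH i j
  rcases le_total i j with h | h
  · rw [min_eq_left h] at hHH
    rw [max_eq_right h, sub_mul, mul_sub, mul_sub, hHH]
    simp only [mul_one, one_mul]; abel
  · rw [min_eq_right h] at hHH
    rw [max_eq_left h, sub_mul, mul_sub, mul_sub, hHH]
    simp only [mul_one, one_mul]; abel

variable [Fintype ι]

theorem sum_smul_mul_sum_smul_of_mul_eq_min (hH : ∀ i j, H i * H j = H (min i j)) (w : ι → R) :
    (∑ i, w i • H i) * (∑ j, w j • H j) = ∑ i, ∑ j, (w i * w j) • H (min i j) := by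
  simp only [Finset.sum_mul_sum, smul_mul_smul_comm, hH]

theorem sum_smul_sub_one_mul_self_of_mul_eq_min (hH : ∀ i j, H i * H j = H (min i j))
    {w : ι → R} (hw : ∑ i, w i = 1) :
    (∑ i, w i • H i - 1) * (∑ j, w j • H j - 1) = ∑ i, ∑ j, (w i * w j) • (1 - H (max i j)) := by
  have hsub : ∑ i, w i • H i - 1 = ∑ i, w i • (H i - 1) := by
    simp only [smul_sub, Finset.sum_sub_distrib, ← Finset.sum_smul, hw, one_smul]
  rw [hsub, Finset.sum_mul_sum]
  simp only [smul_mul_smul_comm, sub_one_mul_sub_one_of_mul_eq_min hH]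

end NestedFamily

theorem mulVec_dotProduct_mulVec_mulVec {R ι κ : Type*} [CommSemiring R] [Fintype ι] [Fintype κ]
    (B : Matrix ι κ R) (A : Matrix ι ι R) (v : κ → R) :
    (B *ᵥ v) ⬝ᵥ (A *ᵥ (B *ᵥ v)) = v ⬝ᵥ ((Bᵀ * A * B) *ᵥ v) := by
  rw [← mulVec_mulVec, ← mulVec_mulVec, dotProduct_mulVec v, vecMul_transpose]

section Moments

variable {ι κ Ω : Type*} [Fintype ι] [Fintype κ] [MeasurableSpace Ω] {P : Measure Ω}
  {e : Ω → κ → ℝ}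

theorem integrable_dotProduct (hint : ∀ i, Integrable (fun ω => e ω i) P) (v : κ → ℝ) :
    Integrable (fun ω => v ⬝ᵥ e ω) P :=
  integrable_finsetSum _ fun i _ => (hint i).const_mul (v i)

theorem integral_dotProduct_eq_zero (hint : ∀ i, Integrable (fun ω => e ω i) P)
    (hmean : ∀ i, ∫ ω, e ω i ∂P = 0) (v : κ → ℝ) : ∫ ω, v ⬝ᵥ e ω ∂P = 0 := by
  simp only [dotProduct, integral_finsetSum _ fun i _ => (hint i).const_mul (v i),
    integral_const_mul, hmean, mul_zero, Finset.sum_const_zero]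

theorem integrable_dotProduct_mulVec_self (hint : ∀ i j, Integrable (fun ω => e ω i * e ω j) P)
    (A : Matrix κ κ ℝ) : Integrable (fun ω => e ω ⬝ᵥ (A *ᵥ e ω)) P := by
  simp only [dotProduct, mulVec, Finset.mul_sum]
  exact integrable_finsetSum _ fun i _ => integrable_finsetSum _ fun j _ =>
    ((hint i j).const_mul (A i j)).congr (ae_of_all _ fun ω => by ring)

theorem integral_dotProduct_mulVec_self {Sg : Matrix κ κ ℝ}
    (hint : ∀ i j, Integrable (fun ω => e ω i * e ω j) P)
    (hcov : ∀ i j, ∫ ω, e ω i * e ω j ∂P = Sg i j) (A : Matrix κ κ ℝ) :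
    ∫ ω, e ω ⬝ᵥ (A *ᵥ e ω) ∂P = trace (A * Sg) := by
  have hpt : ∀ ω, e ω ⬝ᵥ (A *ᵥ e ω) = ∑ i, ∑ j, A i j * (e ω j * e ω i) := fun ω => by
    simp only [dotProduct, mulVec, Finset.mul_sum]
    exact Finset.sum_congr rfl fun i _ => Finset.sum_congr rfl fun j _ => by ring
  simp only [hpt, trace, diag, mul_apply]
  rw [integral_finsetSum _ fun i _ => integrable_finsetSum _ fun j _ =>
    (hint j i).const_mul (A i j)]
  simp only [integral_finsetSum _ fun j _ => (hint j _).const_mul (A _ j), integral_const_mul,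
    hcov]

theorem integral_add_mulVec_dotProduct_mulVec [IsProbabilityMeasure P] {Sg : Matrix κ κ ℝ}
    (hint : ∀ i, Integrable (fun ω => e ω i) P) (hmean : ∀ i, ∫ ω, e ω i ∂P = 0)
    (hint₂ : ∀ i j, Integrable (fun ω => e ω i * e ω j) P)
    (hcov : ∀ i j, ∫ ω, e ω i * e ω j ∂P = Sg i j)
    (c : ι → ℝ) (A : Matrix ι ι ℝ) (B : Matrix ι κ ℝ) :
    ∫ ω, (c + B *ᵥ e ω) ⬝ᵥ (A *ᵥ (c + B *ᵥ e ω)) ∂P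
      = c ⬝ᵥ (A *ᵥ c) + trace (Bᵀ * A * B * Sg) := by
  set v := c ᵥ* A ᵥ* B + (A *ᵥ c) ᵥ* B
  have hpt (x : κ → ℝ) : (c + B *ᵥ x) ⬝ᵥ (A *ᵥ (c + B *ᵥ x))
      = c ⬝ᵥ (A *ᵥ c) + v ⬝ᵥ x + x ⬝ᵥ ((Bᵀ * A * B) *ᵥ x) := by
    have h₁ : c ⬝ᵥ (A *ᵥ (B *ᵥ x)) = (c ᵥ* A ᵥ* B) ⬝ᵥ x := by
      rw [dotProduct_mulVec, dotProduct_mulVec]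
    have h₂ : (B *ᵥ x) ⬝ᵥ (A *ᵥ c) = ((A *ᵥ c) ᵥ* B) ⬝ᵥ x := by
      rw [dotProduct_comm, dotProduct_mulVec]
    have h₃ : (B *ᵥ x) ⬝ᵥ (A *ᵥ (B *ᵥ x)) = x ⬝ᵥ ((Bᵀ * A * B) *ᵥ x) := by
      rw [dotProduct_comm, dotProduct_mulVec, ← mulVec_transpose, dotProduct_comm,
        ← mulVec_mulVec, ← mulVec_mulVec]
    rw [mulVec_add, add_dotProduct, dotProduct_add, dotProduct_add, h₁, h₂, h₃, add_dotProduct]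
    ring
  have hlin : Integrable (fun ω => c ⬝ᵥ (A *ᵥ c) + v ⬝ᵥ e ω) P :=
    (integrable_const _).add (integrable_dotProduct hint v)
  simp only [hpt]
  rw [integral_add hlin (integrable_dotProduct_mulVec_self hint₂ _),
    integral_add (integrable_const _) (integrable_dotProduct hint v), integral_const,
    integral_dotProduct_eq_zero hint hmean, integral_dotProduct_mulVec_self hint₂ hcov]
  simp

theorem integral_conj_smoother_loss [IsProbabilityMeasure P] [DecidableEq κ] {S Q : Matrix κ κ ℝ}
    (hS : Sᵀ = S) (hSdet : IsUnit S.det) (hQ : Qᵀ = Q)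
    (hint : ∀ i, Integrable (fun ω => e ω i) P) (hmean : ∀ i, ∫ ω, e ω i ∂P = 0)
    (hint₂ : ∀ i j, Integrable (fun ω => e ω i * e ω j) P)
    (hcov : ∀ i j, ∫ ω, e ω i * e ω j ∂P = (S * S) i j) (mu : κ → ℝ) :
    ∫ ω, ((S * Q * S⁻¹) *ᵥ (mu + e ω) - mu) ⬝ᵥ ((S * S)⁻¹ *ᵥ ((S * Q * S⁻¹) *ᵥ (mu + e ω) - mu)) ∂P
      = mu ⬝ᵥ ((S⁻¹ * ((Q - 1) * (Q - 1)) * S⁻¹) *ᵥ mu) + trace (Q * Q) := by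
  set G := S * Q * S⁻¹
  have hsplit (x : κ → ℝ) : G *ᵥ (mu + x) - mu = (G - 1) *ᵥ mu + G *ᵥ x := by
    rw [mulVec_add, sub_mulVec, one_mulVec]; abel
  have hG : G - 1 = S * (Q - 1) * S⁻¹ := by
    rw [Matrix.mul_sub, Matrix.sub_mul, Matrix.mul_one, mul_nonsing_inv _ hSdet]
  have hQ₁ : (Q - 1)ᵀ = Q - 1 := by rw [transpose_sub, transpose_one, hQ]
  have hvar : trace (Gᵀ * (S * S)⁻¹ * G * (S * S)) = trace (Q * Q) := by
    rw [transpose_conj_mul_inv_mul_conj hS hSdet, hQ, Matrix.mul_assoc (S⁻¹ * (Q * Q)),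
      nonsing_inv_mul_cancel_left _ _ hSdet, trace_mul_comm, ← Matrix.mul_assoc,
      mul_nonsing_inv _ hSdet, Matrix.one_mul]
  simp only [hsplit]
  rw [integral_add_mulVec_dotProduct_mulVec hint hmean hint₂ hcov, mulVec_dotProduct_mulVec_mulVec,
    hG, transpose_conj_mul_inv_mul_conj hS hSdet, hQ₁, hvar]

end Moments

theorem hatMatrix_mul_hatMatrix_eq_min {R m ι : Type*} [CommRing R] [Fintype m] [LinearOrder ι]
    {k : ι → ℕ} {Z : (i : ι) → Matrix m (Fin (k i)) R} (hZ : ∀ i, IsUnit ((Z i)ᵀ * Z i).det)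
    (hnest : ∀ i j, i ≤ j → ∃ E : Matrix (Fin (k j)) (Fin (k i)) R, Z i = Z j * E) (i j : ι) :
    hatMatrix (Z i) * hatMatrix (Z j) = hatMatrix (Z (min i j)) := by
  rcases le_total i j with h | h
  · obtain ⟨E, hE⟩ := hnest i j h
    rw [min_eq_left h, hE, hatMatrix_mul_mul_hatMatrix (hZ j)]
  · obtain ⟨E, hE⟩ := hnest j i h
    rw [min_eq_right h, hE, hatMatrix_mul_hatMatrix_mul (hZ i)]

theorem stmt4_general {n M : ℕ} {Ω : Type*} [MeasurableSpace Ω] (P : Measure Ω)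
    [IsProbabilityMeasure P]
    (Sg S : Matrix (Fin n) (Fin n) ℝ)
    (hS : S.PosDef) (hSS : S * S = Sg)
    (k : Fin M → ℕ) (hk : StrictMono k)
    (X : (m : Fin M) → Matrix (Fin n) (Fin (k m)) ℝ)
    (hnest : ∀ (m l : Fin M) (h : m ≤ l) (i : Fin n) (j : Fin (k m)),
      X m i j = X l i (Fin.castLE (hk.monotone h) j))
    (hX : ∀ m, LinearIndependent ℝ (fun j : Fin (k m) => fun i : Fin n => X m i j))
    (mu : Fin n → ℝ) (e : Ω → Fin n → ℝ)
    (hmeanInt : ∀ i, Integrable (fun ω => e ω i) P)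
    (hmean : ∀ i, ∫ ω, e ω i ∂P = 0)
    (hcovInt : ∀ i j, Integrable (fun ω => e ω i * e ω j) P)
    (hcov : ∀ i j, ∫ ω, e ω i * e ω j ∂P = Sg i j)
    (w : Fin M → ℝ) (hw1 : ∑ m, w m = 1) :
    let Pstar : Matrix (Fin n) (Fin n) ℝ :=
      ∑ m, w m • (X m * ((X m)ᵀ * Sg⁻¹ * X m)⁻¹ * (X m)ᵀ * Sg⁻¹)
    let Pj : Fin M → Matrix (Fin n) (Fin n) ℝ :=
      fun m => S⁻¹ * X m * ((X m)ᵀ * Sg⁻¹ * X m)⁻¹ * (X m)ᵀ * S⁻¹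
    ∫ ω, dotProduct (Pstar.mulVec (mu + e ω) - mu)
        (Sg⁻¹.mulVec (Pstar.mulVec (mu + e ω) - mu)) ∂P
      = ∑ m, ∑ l, w m * w l *
          (dotProduct mu ((S⁻¹ * (1 - Pj (max m l)) * S⁻¹).mulVec mu)
            + (min (k m) (k l) : ℝ)) := by
  intro Pstar Pj
  subst hSS
  have hSsymm : Sᵀ = S := isHermitian_iff_isSymm.mp hS.isHermitian
  have hSdet : IsUnit S.det := (isUnit_iff_isUnit_det S).mp hS.isUnit
  set H : Fin M → Matrix (Fin n) (Fin n) ℝ := fun m => hatMatrix (S⁻¹ * X m)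
  have hGram (m : Fin M) : IsUnit ((S⁻¹ * X m)ᵀ * (S⁻¹ * X m)).det :=
    isUnit_det_transpose_mul_self (linearIndependent_col_mul hS.inv.isUnit (hX m))
  have hHmul : ∀ m l, H m * H l = H (min m l) :=
    hatMatrix_mul_hatMatrix_eq_min hGram fun m l h => ⟨_, by
      rw [Matrix.mul_assoc, ← eq_mul_submatrix_one_of_apply_eq _ (hnest m l h)]⟩
  have hPj : Pj = H := funext fun m => (hatMatrix_inv_mul hSsymm (X m)).symm
  have hPstar : Pstar = S * (∑ m, w m • H m) * S⁻¹ := by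
    simp only [Pstar, H, Matrix.mul_sum, Matrix.sum_mul, mul_smul_comm, smul_mul_assoc,
      mul_hatMatrix_inv_mul_mul_inv hSsymm hSdet]
  have hHsymm : (∑ m, w m • H m)ᵀ = ∑ m, w m • H m := by
    simp only [transpose_sum, transpose_smul, H, transpose_hatMatrix]
  rw [hPstar, integral_conj_smoother_loss hSsymm hSdet hHsymm hmeanInt hmean hcovInt hcov,
    sum_smul_sub_one_mul_self_of_mul_eq_min hHmul hw1, sum_smul_mul_sum_smul_of_mul_eq_min hHmul,
    hPj]
  simp only [Matrix.mul_sum, Matrix.sum_mul, smul_mul_assoc, mul_smul_comm, sum_mulVec,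
    smul_mulVec, dotProduct_sum, dotProduct_smul, smul_eq_mul, trace_sum, trace_smul, H,
    trace_hatMatrix (hGram _), Fintype.card_fin, hk.monotone.map_min, Nat.cast_min, mul_add,
    Finset.sum_add_distrib]

/-- Lemma 1: Under the nested-models setup `Y = μ + e`, `E[e] = 0`,
`Cov(e) = Sg` positive definite (square root `S`), with nested designs `X m` of
strictly increasing ranks `k m`, GLS projections
`P*(w) = ∑ m, w m • X m (X mᵀ Sg⁻¹ X m)⁻¹ X mᵀ Sg⁻¹` and
`P m = S⁻¹ X m (X mᵀ Sg⁻¹ X m)⁻¹ X mᵀ S⁻¹`, the risk of the averaging estimator is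
`R*(w) = ∑ m ∑ l, w m w l [ μᵀ S⁻¹ (I − P (max m l)) S⁻¹ μ + min (k m) (k l) ]`
for every weight vector `w` in the simplex. -/
theorem stmt4 {n M : ℕ} {Ω : Type*} [MeasurableSpace Ω] (P : Measure Ω)
    [IsProbabilityMeasure P]
    (Sg S : Matrix (Fin n) (Fin n) ℝ)
    (hSg : Sg.PosDef) (hS : S.PosDef) (hSS : S * S = Sg)
    (k : Fin M → ℕ) (hk : StrictMono k)
    (X : (m : Fin M) → Matrix (Fin n) (Fin (k m)) ℝ)
    (hnest : ∀ (m l : Fin M) (h : m ≤ l) (i : Fin n) (j : Fin (k m)),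
      X m i j = X l i (Fin.castLE (hk.monotone h) j))
    (hX : ∀ m, LinearIndependent ℝ (fun j : Fin (k m) => fun i : Fin n => X m i j))
    (mu : Fin n → ℝ) (e : Ω → Fin n → ℝ)
    (hmeanInt : ∀ i, Integrable (fun ω => e ω i) P)
    (hmean : ∀ i, ∫ ω, e ω i ∂P = 0)
    (hcovInt : ∀ i j, Integrable (fun ω => e ω i * e ω j) P)
    (hcov : ∀ i j, ∫ ω, e ω i * e ω j ∂P = Sg i j)
    (w : Fin M → ℝ) (hw0 : ∀ m, 0 ≤ w m) (hw1 : ∑ m, w m = 1) :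
    let Pstar : Matrix (Fin n) (Fin n) ℝ :=
      ∑ m, w m • (X m * ((X m)ᵀ * Sg⁻¹ * X m)⁻¹ * (X m)ᵀ * Sg⁻¹)
    let Pj : Fin M → Matrix (Fin n) (Fin n) ℝ :=
      fun m => S⁻¹ * X m * ((X m)ᵀ * Sg⁻¹ * X m)⁻¹ * (X m)ᵀ * S⁻¹
    ∫ ω, dotProduct (Pstar.mulVec (mu + e ω) - mu)
        (Sg⁻¹.mulVec (Pstar.mulVec (mu + e ω) - mu)) ∂P
      = ∑ m, ∑ l, w m * w l *
          (dotProduct mu ((S⁻¹ * (1 - Pj (max m l)) * S⁻¹).mulVec mu)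
            + (min (k m) (k l) : ℝ)) :=
  stmt4_general P Sg S hS hSS k hk X hnest hX mu e hmeanInt hmean hcovInt hcov w hw1
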